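/- arXiv:1910.13096 — 3 statements merged into one kernel-verified Lean document; each statement's English description precedes it below -/
import Mathlib

section
/- Let d ≥ 2 be an integer and N ≥ 3√(d-1). For every x ∈ ℝ^{d-1} with |x| ≤ N (Euclidean norm) there exists r ∈ ℤ^{d-1} with r_1 + ... + r_{d-1} even, |r| ≤ N, and |x_j - 2r_j| ≤ 3 for all j. -/
/-! Round each `x j / 2` down to an integer, and if the results have odd sum round one of them up
instead; this gives `r` with even sum and `|x j - 2 r j| ≤ 2`. Then `‖x - 2r‖ ≤ 2√(d-1) ≤ 2N/3`,
so `2‖r‖ ≤ ‖x‖ + ‖x - 2r‖ ≤ 5N/3`. -/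

open Finset

lemma abs_sub_two_mul_le_two {a : ℝ} {k : ℤ} (h₀ : ⌊a / 2⌋ ≤ k) (h₁ : k ≤ ⌊a / 2⌋ + 1) :
    |a - 2 * k| ≤ 2 := by
  have hlo : (⌊a / 2⌋ : ℝ) ≤ k := by exact_mod_cast h₀
  have hhi : (k : ℝ) ≤ ⌊a / 2⌋ + 1 := by exact_mod_cast h₁
  have := Int.floor_le (a / 2)
  have := Int.lt_floor_add_one (a / 2)
  rw [abs_le]
  constructor <;> linarith

theorem exists_even_sum_abs_sub_two_mul_le_two {ι : Type*} [Fintype ι] (x : ι → ℝ) :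
    ∃ r : ι → ℤ, Even (∑ j, r j) ∧ ∀ j, |x j - 2 * r j| ≤ 2 := by
  classical
  set q : ι → ℤ := fun j => ⌊x j / 2⌋
  by_cases hq : Even (∑ j, q j)
  · exact ⟨q, hq, fun j => abs_sub_two_mul_le_two le_rfl (Int.le_add_one le_rfl)⟩
  rcases isEmpty_or_nonempty ι with hι | ⟨⟨i⟩⟩
  · simp at hq
  refine ⟨q + Pi.single i 1, ?_, fun j => abs_sub_two_mul_le_two ?_ ?_⟩
  · simp only [Pi.add_apply]
    rw [sum_add_distrib, sum_pi_single', if_pos (mem_univ i), Int.even_add_one]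
    exact hq
  all_goals
    simp only [Pi.add_apply, Pi.single_apply, q]
    split_ifs <;> omega

lemma EuclideanSpace.norm_le_sqrt_card_mul {ι : Type*} [Fintype ι] {v : EuclideanSpace ℝ ι}
    {c : ℝ} (hc : 0 ≤ c) (hv : ∀ j, |v j| ≤ c) : ‖v‖ ≤ √(Fintype.card ι) * c := by
  calc ‖v‖ = √(∑ j, ‖v j‖ ^ 2) := EuclideanSpace.norm_eq v
    _ ≤ √(∑ _j : ι, c ^ 2) := by
      gcongr with j
      exact hv j
    _ = √(Fintype.card ι) * c := by
      rw [sum_const, card_univ, nsmul_eq_mul, Real.sqrt_mul (Nat.cast_nonneg _),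
        Real.sqrt_sq hc]

-- At `d = 0` both sides vanish: truncated subtraction on the left, `√(-1) = 0` on the right.
lemma Real.sqrt_natCast_sub_one (d : ℕ) : √((d - 1 : ℕ) : ℝ) = √((d : ℝ) - 1) := by
  cases d <;> simp [Real.sqrt_eq_zero_of_nonpos]

theorem stmt_4_general (d : ℕ) (N : ℝ) (hN : N ≥ 3 * Real.sqrt (d - 1))
    (x : EuclideanSpace ℝ (Fin (d - 1))) (hx : ‖x‖ ≤ N) :
    ∃ r : Fin (d - 1) → ℤ, Even (∑ j, r j) ∧
      ‖(show EuclideanSpace ℝ (Fin (d - 1)) from WithLp.toLp 2 (fun j => (r j : ℝ)))‖ ≤ N ∧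
      ∀ j, |x j - 2 * (r j : ℝ)| ≤ 3 := by
  obtain ⟨r, hr_even, hr_close⟩ := exists_even_sum_abs_sub_two_mul_le_two (fun j => x j)
  refine ⟨r, hr_even, ?_, fun j => (hr_close j).trans (by norm_num)⟩
  set v : EuclideanSpace ℝ (Fin (d - 1)) := WithLp.toLp 2 (fun j => (r j : ℝ))
  have hclose : ‖x - (2 : ℝ) • v‖ ≤ √((d : ℝ) - 1) * 2 := by
    have := EuclideanSpace.norm_le_sqrt_card_mul (v := x - (2 : ℝ) • v) zero_le_two
      (fun j => by simpa [v] using hr_close j)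
    rwa [Fintype.card_fin, Real.sqrt_natCast_sub_one] at this
  have htwo : 2 * ‖v‖ ≤ ‖x‖ + ‖x - (2 : ℝ) • v‖ := by
    simpa [norm_smul, norm_sub_rev] using norm_le_norm_add_norm_sub' ((2 : ℝ) • v) x
  linarith [Real.sqrt_nonneg ((d : ℝ) - 1)]

theorem stmt_4 (d : ℕ) (hd : 2 ≤ d) (N : ℝ) (hN : N ≥ 3 * Real.sqrt (d - 1))
    (x : EuclideanSpace ℝ (Fin (d - 1))) (hx : ‖x‖ ≤ N) :
    ∃ r : Fin (d - 1) → ℤ, Even (∑ j, r j) ∧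
      ‖(show EuclideanSpace ℝ (Fin (d - 1)) from WithLp.toLp 2 (fun j => (r j : ℝ)))‖ ≤ N ∧
      ∀ j, |x j - 2 * (r j : ℝ)| ≤ 3 :=
  stmt_4_general d N hN x hx
end

section
/- There exists a constant c_5 > 0 depending only on d such that for every integer d ≥ 2 and all reals N ≥ b ≥ 3√(d-1), the sum over r ∈ ℤ^{d-1} with even coordinate sum and |r| ≤ N of 1/(|r|^2 + b^2)^{(d-1)/2} is at least c_5 · log(N/b). -/
/-!
Write `n = d - 1`. For a point `r` with `|r| ≤ N`, the radii `R = 2^k b ≥ max(|r|, b)` form a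
geometric progression, so `∑ R^{-n}` over them is at most `2 max(|r|, b)^{-n}`, which is
comparable to the summand `(|r|² + b²)^{-n/2}`. Exchanging the sums, each dyadic radius
`b ≤ R ≤ N` contributes `R^{-n}` times the number of even points in the ball of radius `R`,
and this number is at least `(R / (2√n))^n`: the doubled points `2s` of the cube
`{0, …, ⌊R / (2√n)⌋}^n` lie in that ball. There are at least `log (N / b)` such radii.
-/

open Finset

theorem sum_range_dyadic_inv_pow_le {n : ℕ} (hn : n ≠ 0) (ρ : ℝ) (m : ℕ) {b : ℝ} (hb : 0 < b) :
    ∑ k ∈ range m, (if ρ ≤ 2 ^ k * b then ((2 ^ k * b) ^ n)⁻¹ else 0) ≤ 2 / max ρ b ^ n := by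
  induction m generalizing b with
  | zero => simp only [range_zero, sum_empty]; positivity
  | succ m ih =>
    have hshift : ∀ k : ℕ, (2 : ℝ) ^ (k + 1) * b = 2 ^ k * (2 * b) := fun k => by ring
    rw [sum_range_succ']
    simp only [hshift, pow_zero, one_mul]
    have htail := ih (by positivity : 0 < 2 * b)
    rcases le_or_gt ρ b with hρ | hρ
    · have h2b : 2 * b ^ n ≤ (2 * b) ^ n := by
        rw [mul_pow]
        gcongr
        exact le_self_pow₀ one_le_two hn
      have htail_le : 2 / max ρ (2 * b) ^ n ≤ (b ^ n)⁻¹ := by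
        rw [max_eq_right (by linarith), div_le_iff₀ (by positivity)]
        field_simp
        exact h2b
      rw [if_pos hρ, max_eq_right hρ]
      have hsplit : 2 / b ^ n = (b ^ n)⁻¹ + (b ^ n)⁻¹ := by ring
      linarith
    · rw [if_neg (not_le.mpr hρ), add_zero, max_eq_left hρ.le]
      refine htail.trans (div_le_div_of_nonneg_left zero_le_two (pow_pos (hb.trans hρ) n) ?_)
      exact pow_le_pow_left₀ (by linarith) (le_max_left _ _) n

theorem rpow_half_sq_add_sq_le {ρ b : ℝ} (hρ : 0 ≤ ρ) (hb : 0 ≤ b) (n : ℕ) :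
    (ρ ^ 2 + b ^ 2) ^ ((n : ℝ) / 2) ≤ (2 * max ρ b) ^ n := by
  have hmax : 0 ≤ 2 * max ρ b := by positivity
  calc (ρ ^ 2 + b ^ 2) ^ ((n : ℝ) / 2) ≤ ((2 * max ρ b) ^ 2) ^ ((n : ℝ) / 2) := by
        gcongr
        nlinarith [le_max_left ρ b, le_max_right ρ b]
    _ = (2 * max ρ b) ^ n := by
        rw [← Real.rpow_natCast _ 2, ← Real.rpow_mul hmax, Nat.cast_ofNat,
          mul_div_cancel₀ _ two_ne_zero, Real.rpow_natCast]

theorem inv_two_pow_mul_sum_dyadic_le {n : ℕ} (hn : n ≠ 0) {ρ b : ℝ} (hρ : 0 ≤ ρ) (hb : 0 < b)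
    (m : ℕ) :
    (2 ^ (n + 1))⁻¹ * ∑ k ∈ range m, (if ρ ≤ 2 ^ k * b then ((2 ^ k * b) ^ n)⁻¹ else 0) ≤
      1 / (ρ ^ 2 + b ^ 2) ^ ((n : ℝ) / 2) := by
  calc (2 ^ (n + 1))⁻¹ * ∑ k ∈ range m, (if ρ ≤ 2 ^ k * b then ((2 ^ k * b) ^ n)⁻¹ else 0)
      ≤ (2 ^ (n + 1))⁻¹ * (2 / max ρ b ^ n) := by
        gcongr
        exact sum_range_dyadic_inv_pow_le hn ρ m hb
    _ = 1 / (2 * max ρ b) ^ n := by field_simp; ring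
    _ ≤ 1 / (ρ ^ 2 + b ^ 2) ^ ((n : ℝ) / 2) :=
        one_div_le_one_div_of_le (by positivity) (rpow_half_sq_add_sq_le hρ hb.le n)

noncomputable def evenBall (n : ℕ) (R : ℝ) : Finset (Fin n → ℤ) :=
  {r ∈ Fintype.piFinset fun _ => Icc (-⌈R⌉) ⌈R⌉ | Even (∑ j, r j) ∧ √(∑ j, (r j : ℝ) ^ 2) ≤ R}

theorem mem_evenBall {n : ℕ} {R : ℝ} {r : Fin n → ℤ} :
    r ∈ evenBall n R ↔ Even (∑ j, r j) ∧ √(∑ j, (r j : ℝ) ^ 2) ≤ R := by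
  refine ⟨fun h => (mem_filter.mp h).2, fun h => mem_filter.mpr ⟨?_, h⟩⟩
  refine Fintype.mem_piFinset.mpr fun j => mem_Icc.mpr ?_
  have hj : |(r j : ℝ)| ≤ R := (Real.abs_le_sqrt (single_le_sum (f := fun j => (r j : ℝ) ^ 2)
    (fun _ _ => sq_nonneg _) (mem_univ j))).trans h.2
  have hj' := abs_le.mp (hj.trans (Int.le_ceil R))
  exact ⟨by exact_mod_cast hj'.1, by exact_mod_cast hj'.2⟩

theorem pow_div_le_card_evenBall (n : ℕ) {R : ℝ} (hR : 0 ≤ R) :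
    (R / (2 * √n)) ^ n ≤ #(evenBall n R) := by
  set M := ⌊R / (2 * √n)⌋₊
  have hM : (M : ℝ) * (2 * √n) ≤ R := by
    rcases (Real.sqrt_nonneg n).eq_or_lt with h0 | hpos
    · rw [← h0]; simpa using hR
    · exact (le_div_iff₀ (by positivity)).mp (Nat.floor_le (by positivity))
  have hbox : ∀ s ∈ Fintype.piFinset fun _ : Fin n => range (M + 1),
      (fun j => 2 * (s j : ℤ)) ∈ evenBall n R := by
    intro s hs
    refine mem_evenBall.mpr ⟨by rw [← mul_sum]; exact even_two_mul _,
      (Real.sqrt_le_left hR).mpr ?_⟩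
    have hsj : ∀ j, ((2 * (s j : ℤ) : ℤ) : ℝ) ^ 2 ≤ (2 * M) ^ 2 := fun j => by
      have : s j ≤ M := Nat.lt_succ_iff.mp (mem_range.mp (Fintype.mem_piFinset.mp hs j))
      push_cast
      gcongr
    calc ∑ j, ((2 * (s j : ℤ) : ℤ) : ℝ) ^ 2 ≤ ∑ _j : Fin n, (2 * (M : ℝ)) ^ 2 :=
          sum_le_sum fun j _ => hsj j
      _ = (M * (2 * √n)) ^ 2 := by
          rw [sum_const, card_univ, Fintype.card_fin, nsmul_eq_mul, mul_pow _ (2 * √n),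
            mul_pow 2 (√n), Real.sq_sqrt n.cast_nonneg]
          ring
      _ ≤ R ^ 2 := by gcongr
  have hinj : Function.Injective fun (s : Fin n → ℕ) j => 2 * (s j : ℤ) := fun s t hst =>
    funext fun j => by simpa using congrFun hst j
  calc (R / (2 * √n)) ^ n ≤ (M + 1 : ℝ) ^ n := by
        gcongr
        exact (Nat.lt_floor_add_one _).le
    _ = #(Fintype.piFinset fun _ : Fin n => range (M + 1)) := by simp
    _ ≤ #(evenBall n R) := by
        exact_mod_cast card_le_card_of_injOn _ (fun s hs => hbox s hs) hinj.injOn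

theorem tsum_subtype_eq_sum_evenBall (n : ℕ) (N : ℝ) (g : (Fin n → ℤ) → ℝ) :
    ∑' r : {r : Fin n → ℤ // Even (∑ j, r j) ∧ √(∑ j, (r j : ℝ) ^ 2) ≤ N}, g r =
      ∑ r ∈ evenBall n N, g r := by
  rw [← Finset.tsum_subtype]
  exact (Equiv.subtypeEquivRight fun r : Fin n → ℤ => (mem_evenBall (R := N)).symm).tsum_eq
    fun r => g r

theorem exists_log_le_nat_forall_two_pow_le {x : ℝ} (hx : 1 ≤ x) :
    ∃ m : ℕ, Real.log x ≤ m ∧ ∀ k < m, (2 : ℝ) ^ k ≤ x := by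
  have hlog2 : 0 ≤ Real.logb 2 x := Real.logb_nonneg one_lt_two hx
  refine ⟨⌊Real.logb 2 x⌋₊ + 1, ?_, fun k hk => ?_⟩
  · calc Real.log x ≤ Real.log x / Real.log 2 :=
          le_div_self (Real.log_nonneg hx) (Real.log_pos one_lt_two)
            (Real.log_two_lt_d9.le.trans (by norm_num))
      _ ≤ _ := by push_cast; exact (Nat.lt_floor_add_one _).le
  · have hk : (k : ℝ) ≤ Real.logb 2 x :=
      (Nat.cast_le.mpr (Nat.lt_succ_iff.mp hk)).trans (Nat.floor_le hlog2)
    rw [← Real.rpow_natCast]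
    exact (Real.le_logb_iff_rpow_le one_lt_two (by linarith)).mp hk

theorem mul_log_div_le_sum_evenBall {n : ℕ} (hn : n ≠ 0) {b N : ℝ} (hb : 0 < b) (hbN : b ≤ N) :
    (2 ^ (n + 1) * (2 * √n) ^ n)⁻¹ * Real.log (N / b) ≤
      ∑ r ∈ evenBall n N, 1 / ((∑ j, (r j : ℝ) ^ 2) + b ^ 2) ^ ((n : ℝ) / 2) := by
  obtain ⟨m, hlog, hscale⟩ := exists_log_le_nat_forall_two_pow_le ((one_le_div hb).mpr hbN)
  set ρ : (Fin n → ℤ) → ℝ := fun r => √(∑ j, (r j : ℝ) ^ 2)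
  have hcount : ∀ k ∈ range m, ((2 * √n) ^ n)⁻¹ ≤
      ((2 ^ k * b) ^ n)⁻¹ * #{r ∈ evenBall n N | ρ r ≤ 2 ^ k * b} := by
    intro k hk
    have hR : 2 ^ k * b ≤ N := (le_div_iff₀ hb).mp (hscale k (mem_range.mp hk))
    have hsub : evenBall n (2 ^ k * b) ⊆ {r ∈ evenBall n N | ρ r ≤ 2 ^ k * b} := fun r hr => by
      obtain ⟨heven, hr⟩ := mem_evenBall.mp hr
      exact mem_filter.mpr ⟨mem_evenBall.mpr ⟨heven, hr.trans hR⟩, hr⟩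
    calc ((2 * √n) ^ n)⁻¹ = ((2 ^ k * b) ^ n)⁻¹ * ((2 ^ k * b) / (2 * √n)) ^ n := by
          rw [div_pow, ← mul_div_assoc, inv_mul_cancel₀ (by positivity), one_div]
      _ ≤ ((2 ^ k * b) ^ n)⁻¹ * #{r ∈ evenBall n N | ρ r ≤ 2 ^ k * b} := by
          gcongr
          exact (pow_div_le_card_evenBall n (by positivity)).trans
            (by exact_mod_cast card_le_card hsub)
  calc (2 ^ (n + 1) * (2 * √n) ^ n)⁻¹ * Real.log (N / b)
      ≤ (2 ^ (n + 1))⁻¹ * ∑ _k ∈ range m, ((2 * √n) ^ n)⁻¹ := by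
        rw [sum_const, card_range, nsmul_eq_mul, mul_inv, mul_assoc, mul_comm (m : ℝ)]
        gcongr
    _ ≤ (2 ^ (n + 1))⁻¹ * ∑ k ∈ range m,
          ((2 ^ k * b) ^ n)⁻¹ * #{r ∈ evenBall n N | ρ r ≤ 2 ^ k * b} := by
        gcongr with k hk
        exact hcount k hk
    _ = ∑ r ∈ evenBall n N, (2 ^ (n + 1))⁻¹ *
          ∑ k ∈ range m, (if ρ r ≤ 2 ^ k * b then ((2 ^ k * b) ^ n)⁻¹ else 0) := by
        have hfilter : ∀ k,
            ((2 ^ k * b) ^ n : ℝ)⁻¹ * (#{r ∈ evenBall n N | ρ r ≤ 2 ^ k * b} : ℝ) =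
              ∑ r ∈ evenBall n N, if ρ r ≤ 2 ^ k * b then ((2 ^ k * b) ^ n)⁻¹ else 0 := fun k => by
          rw [← sum_filter, sum_const, nsmul_eq_mul, mul_comm]
        simp only [hfilter, ← mul_sum]
        rw [sum_comm]
    _ ≤ _ := by
        gcongr with r
        rw [← Real.sq_sqrt (sum_nonneg fun j _ => sq_nonneg (r j : ℝ))]
        exact inv_two_pow_mul_sum_dyadic_le hn (Real.sqrt_nonneg _) hb m

theorem stmt_11 (d : ℕ) (hd : 2 ≤ d) :
    ∃ c₅ : ℝ, 0 < c₅ ∧ ∀ b N : ℝ, 3 * Real.sqrt (d - 1) ≤ b → b ≤ N →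
      ∑' r : {r : Fin (d - 1) → ℤ //
          Even (∑ j, r j) ∧ Real.sqrt (∑ j, ((r j : ℝ)) ^ 2) ≤ N},
        1 / ((∑ j, ((r.1 j : ℝ)) ^ 2) + b ^ 2) ^ (((d : ℝ) - 1) / 2) ≥
      c₅ * Real.log (N / b) := by
  obtain ⟨n, rfl⟩ : ∃ n, d = n + 1 := ⟨d - 1, by omega⟩
  have hn : n ≠ 0 := by omega
  have hcast : ((n + 1 : ℕ) : ℝ) - 1 = n := by push_cast; ring
  refine ⟨(2 ^ (n + 1) * (2 * √n) ^ n)⁻¹, by positivity, fun b N hb hbN => ?_⟩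
  have hb0 : 0 < b := lt_of_lt_of_le (by positivity) (hcast ▸ hb)
  rw [hcast, Nat.add_sub_cancel, ge_iff_le,
    tsum_subtype_eq_sum_evenBall n N fun r => 1 / ((∑ j, (r j : ℝ) ^ 2) + b ^ 2) ^ ((n : ℝ) / 2)]
  exact mul_log_div_le_sum_evenBall hn hb0 hbN
end

section
/- Let K ⊂ ℝ^d be closed and let S_1, ..., S_m : K → K be maps such that there exist b_1, ..., b_m ∈ (0,1) with b_j|x−y| ≤ |S_j(x) − S_j(y)| ≤ c|x−y| for some c < 1 and all x,y ∈ K. Let K_0 be a nonempty compact subset of K with K_0 = ∪_{j=1}^m S_j(K_0) and S_j(K_0) ∩ S_k(K_0) = ∅ for j ≠ k. If t > 0 satisfies Σ_{j=1}^m b_j^t = 1, then the Hausdorff dimension of K_0 is at least t. -/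
/-!
Mass distribution principle. A sequence `ω` of indices codes the point of `K₀` lying in all the
nested pieces `S (ω 0) ∘ ⋯ ∘ S (ω (k-1)) '' K₀`; push forward the Bernoulli measure with weights
`b j ^ t` along this coding map. If `δ` separates the first-level pieces, the lower bounds `b j`
show that two codes first differing at position `i` give points at distance at least
`δ * ∏ l < i, b (ω l)`. So all codes of points of a set of diameter `< ρ` lie in a single
cylinder of measure `∏ b ^ t ≤ (ρ / δ) ^ t`. Hence the image measure `ν` on `K₀` satisfies
`ν U ≤ (diam U / δ) ^ t` for every `U`, and `μH[t] K₀ > 0`.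
-/

open Set Metric MeasureTheory Filter Topology PiNat Finset
open scoped ENNReal NNReal

theorem le_dimH_of_measure_le_diam_div_rpow {X : Type*} [MetricSpace X] [MeasurableSpace X]
    [BorelSpace X] (ν : Measure X) {s : Set X} (hs : ν s ≠ 0) {r t : ℝ} (hr : 0 < r)
    (ht : 0 ≤ t) (h : ∀ u, Bornology.IsBounded u → ν u ≤ ENNReal.ofReal ((diam u / r) ^ t)) :
    ENNReal.ofReal t ≤ dimH s := by
  set C := ENNReal.ofReal r ^ t
  have hC0 : C ≠ 0 := by positivity
  have hle : C • ν ≤ μH[t] := by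
    refine Measure.le_hausdorffMeasure t _ 1 one_pos fun u hu => ?_
    have hub : Bornology.IsBounded u :=
      isBounded_iff_ediam_ne_top.2 (hu.trans_lt ENNReal.one_lt_top).ne
    calc (C • ν) u ≤ C * ENNReal.ofReal ((diam u / r) ^ t) := by
          rw [Measure.smul_apply, smul_eq_mul]; gcongr; exact h u hub
      _ = ENNReal.ofReal (diam u) ^ t := by
          rw [← ENNReal.ofReal_rpow_of_nonneg (by positivity) ht,
            ← ENNReal.mul_rpow_of_nonneg _ _ ht, ← ENNReal.ofReal_mul hr.le,
            mul_div_cancel₀ _ hr.ne']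
      _ = ediam u ^ t := by rw [diam, ENNReal.ofReal_toReal hub.ediam_ne_top]
  refine le_dimH_of_hausdorffMeasure_ne_zero (d := t.toNNReal) ?_
  rw [Real.coe_toNNReal t ht]
  exact fun h0 => hs ((mul_eq_zero.1 (le_zero_iff.1 (h0 ▸ hle s))).resolve_left hC0)

theorem exists_pos_le_dist_of_pairwise_disjoint {X ι : Type*} [MetricSpace X] [Finite ι]
    {A : ι → Set X} (hA : ∀ j, IsCompact (A j)) (hdisj : Pairwise fun j k => Disjoint (A j) (A k)) :
    ∃ δ > 0, ∀ j k, j ≠ k → ∀ x ∈ A j, ∀ y ∈ A k, δ ≤ dist x y := by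
  have hev : ∀ j k, ∀ᶠ δ in 𝓝[>] (0 : ℝ), j ≠ k → ∀ x ∈ A j, ∀ y ∈ A k, δ ≤ dist x y := by
    intro j k
    by_cases hjk : j = k
    · exact Eventually.of_forall fun _ hne => absurd hjk hne
    obtain ⟨r, hr, hsep⟩ := Metric.exists_pos_forall_lt_edist (hA j) (hA k).isClosed (hdisj hjk)
    filter_upwards [Ioo_mem_nhdsGT (NNReal.coe_pos.2 hr)] with δ hδ _ x hx y hy
    have hxy := hsep x hx y hy
    rw [edist_nndist, ENNReal.coe_lt_coe, ← NNReal.coe_lt_coe, coe_nndist] at hxy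
    exact hδ.2.le.trans hxy.le
  obtain ⟨δ, hδ, hpos⟩ :=
    ((eventually_all.2 fun j => eventually_all.2 (hev j)).and self_mem_nhdsWithin).exists
  exact ⟨δ, hpos, hδ⟩

namespace IteratedFunctionSystem

variable {X ι : Type*} (S : ι → X → X)

def wordComp (ω : ℕ → ι) : ℕ → X → X
  | 0 => id
  | k + 1 => wordComp ω k ∘ S (ω k)

variable {S}

lemma wordComp_congr {ω ω' : ℕ → ι} {k : ℕ} (h : ω' ∈ cylinder ω k) :
    wordComp S ω' k = wordComp S ω k := by
  induction k with
  | zero => rfl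
  | succ k ih =>
    simp only [wordComp, h k k.lt_succ_self, ih fun i hi => h i (hi.trans k.lt_succ_self)]

lemma mapsTo_wordComp {K₀ : Set X} (hmaps : ∀ j, MapsTo (S j) K₀ K₀) (ω : ℕ → ι) (k : ℕ) :
    MapsTo (wordComp S ω k) K₀ K₀ := by
  induction k with
  | zero => exact mapsTo_id K₀
  | succ k ih => exact ih.comp (hmaps (ω k))

lemma wordComp_succ_image {K₀ : Set X} (ω : ℕ → ι) (k : ℕ) :
    wordComp S ω (k + 1) '' K₀ = wordComp S ω k '' (S (ω k) '' K₀) :=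
  image_comp _ _ _

variable [MetricSpace X]

lemma lipschitzOnWith_wordComp {K₀ : Set X} {c : ℝ≥0} (hmaps : ∀ j, MapsTo (S j) K₀ K₀)
    (hS : ∀ j, LipschitzOnWith c (S j) K₀) (ω : ℕ → ι) (k : ℕ) :
    LipschitzOnWith (c ^ k) (wordComp S ω k) K₀ := by
  induction k with
  | zero => simpa [wordComp] using LipschitzWith.id.lipschitzOnWith
  | succ k ih => simpa [pow_succ, wordComp] using ih.comp (hS (ω k)) (hmaps (ω k))

lemma prod_mul_dist_le_dist_wordComp {K₀ : Set X} {b : ι → ℝ} (hmaps : ∀ j, MapsTo (S j) K₀ K₀)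
    (hb : ∀ j, 0 ≤ b j) (hlow : ∀ j, ∀ x ∈ K₀, ∀ y ∈ K₀, b j * dist x y ≤ dist (S j x) (S j y))
    (ω : ℕ → ι) (k : ℕ) {x y : X} (hx : x ∈ K₀) (hy : y ∈ K₀) :
    (∏ i ∈ range k, b (ω i)) * dist x y ≤ dist (wordComp S ω k x) (wordComp S ω k y) := by
  induction k generalizing x y with
  | zero => simp [wordComp]
  | succ k ih =>
    calc (∏ i ∈ range (k + 1), b (ω i)) * dist x y
        = (∏ i ∈ range k, b (ω i)) * (b (ω k) * dist x y) := by rw [prod_range_succ, mul_assoc]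
      _ ≤ (∏ i ∈ range k, b (ω i)) * dist (S (ω k) x) (S (ω k) y) :=
        mul_le_mul_of_nonneg_left (hlow _ x hx y hy) (prod_nonneg fun i _ => hb _)
      _ ≤ _ := ih (hmaps _ hx) (hmaps _ hy)

lemma exists_continuous_coding [TopologicalSpace ι] [DiscreteTopology ι] {K₀ : Set X}
    (hK₀ : IsCompact K₀) (hne : K₀.Nonempty) (hmaps : ∀ j, MapsTo (S j) K₀ K₀) {c : ℝ≥0}
    (hc : c < 1) (hS : ∀ j, LipschitzOnWith c (S j) K₀) :
    ∃ π : (ℕ → ι) → X, Continuous π ∧ ∀ ω k, π ω ∈ wordComp S ω k '' K₀ := by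
  have hcompact : ∀ ω k, IsCompact (wordComp S ω k '' K₀) := fun ω k =>
    hK₀.image_of_continuousOn (lipschitzOnWith_wordComp hmaps hS ω k).continuousOn
  have hnonempty : ∀ ω, (⋂ k, wordComp S ω k '' K₀).Nonempty := fun ω =>
    IsCompact.nonempty_iInter_of_sequence_nonempty_isCompact_isClosed _
      (fun k => by rw [wordComp_succ_image]; exact image_mono (hmaps _).image_subset)
      (fun k => hne.image _) (hcompact ω 0) (fun k => (hcompact ω k).isClosed)
  choose π hπ using hnonempty
  replace hπ : ∀ ω k, π ω ∈ wordComp S ω k '' K₀ := fun ω => mem_iInter.1 (hπ ω)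
  refine ⟨π, continuous_iff_continuousAt.2 fun ω => Metric.tendsto_nhds.2 fun ε hε => ?_, hπ⟩
  have hshrink : Tendsto (fun k => (c : ℝ) ^ k * diam K₀) atTop (𝓝 0) := by
    simpa using (tendsto_pow_atTop_nhds_zero_of_lt_one c.coe_nonneg hc).mul_const (diam K₀)
  obtain ⟨k, hk⟩ := (hshrink.eventually (gt_mem_nhds hε)).exists
  filter_upwards [(isOpen_cylinder _ ω k).mem_nhds (self_mem_cylinder ω k)] with ω' hω'
  obtain ⟨x, hx, hxπ⟩ := hπ ω' k
  obtain ⟨y, hy, hyπ⟩ := hπ ω k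
  rw [← hxπ, ← hyπ, wordComp_congr hω']
  calc dist (wordComp S ω k x) (wordComp S ω k y) ≤ c ^ k * dist x y := by
        simpa using (lipschitzOnWith_wordComp hmaps hS ω k).dist_le_mul x hx y hy
    _ ≤ c ^ k * diam K₀ := by gcongr; exact dist_le_diam_of_mem hK₀.isBounded hx hy
    _ < ε := hk

noncomputable def bernoulli [MeasurableSpace ι] (p : PMF ι) : Measure (ℕ → ι) :=
  Measure.infinitePi fun _ => p.toMeasure

instance [MeasurableSpace ι] (p : PMF ι) : IsProbabilityMeasure (bernoulli p) := by
  unfold bernoulli; infer_instance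

lemma bernoulli_cylinder [MeasurableSpace ι] [MeasurableSingletonClass ι] (p : PMF ι)
    (ω : ℕ → ι) (k : ℕ) : bernoulli p (cylinder ω k) = ∏ i ∈ range k, p (ω i) := by
  rw [bernoulli, cylinder_eq_pi,
    Measure.infinitePi_pi (μ := fun _ => p.toMeasure) fun i _ => measurableSet_singleton _]
  simp [PMF.toMeasure_apply_singleton]

lemma exists_mul_prod_lt {b : ι → ℝ} (hb : ∀ j, 0 ≤ b j) {β : ℝ} (hbβ : ∀ j, b j ≤ β)
    (hβ : β < 1) (δ : ℝ) (ω : ℕ → ι) {ρ : ℝ} (hρ : 0 < ρ) :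
    ∃ k, δ * ∏ i ∈ range k, b (ω i) < ρ := by
  have hβ0 : 0 ≤ β := (hb (ω 0)).trans (hbβ _)
  have hlim : Tendsto (fun k => |δ| * β ^ k) atTop (𝓝 0) := by
    simpa using (tendsto_pow_atTop_nhds_zero_of_lt_one hβ0 hβ).const_mul |δ|
  obtain ⟨k, hk⟩ := (hlim.eventually (gt_mem_nhds hρ)).exists
  refine ⟨k, lt_of_le_of_lt ?_ hk⟩
  calc δ * ∏ i ∈ range k, b (ω i) ≤ |δ| * ∏ i ∈ range k, b (ω i) :=
        mul_le_mul_of_nonneg_right (le_abs_self δ) (prod_nonneg fun i _ => hb _)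
    _ ≤ |δ| * β ^ k := by
        gcongr
        simpa using prod_le_prod (s := range k) (fun i _ => hb (ω i)) (fun i _ => hbβ (ω i))

structure IsSeparatedWith (S : ι → X → X) (K₀ : Set X) (b : ι → ℝ) (δ : ℝ) : Prop where
  mapsTo : ∀ j, MapsTo (S j) K₀ K₀
  nonneg : ∀ j, 0 ≤ b j
  mul_dist_le : ∀ j, ∀ x ∈ K₀, ∀ y ∈ K₀, b j * dist x y ≤ dist (S j x) (S j y)
  le_dist : ∀ j j', j ≠ j' → ∀ x ∈ K₀, ∀ y ∈ K₀, δ ≤ dist (S j x) (S j' y)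

namespace IsSeparatedWith

variable {K₀ : Set X} {b : ι → ℝ} {δ : ℝ} {π : (ℕ → ι) → X}

lemma mul_prod_le_dist (h : IsSeparatedWith S K₀ b δ)
    (hπ : ∀ ω k, π ω ∈ wordComp S ω k '' K₀) {ω ω' : ℕ → ι} {i : ℕ}
    (hω' : ω' ∈ cylinder ω i) (hne : ω' i ≠ ω i) :
    δ * ∏ l ∈ range i, b (ω l) ≤ dist (π ω') (π ω) := by
  obtain ⟨x', hx', hx'π⟩ := hπ ω' (i + 1)
  obtain ⟨x, hx, hxπ⟩ := hπ ω (i + 1)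
  simp only [wordComp, Function.comp_apply, wordComp_congr hω'] at hx'π hxπ
  rw [← hx'π, ← hxπ, mul_comm]
  calc (∏ l ∈ range i, b (ω l)) * δ
      ≤ (∏ l ∈ range i, b (ω l)) * dist (S (ω' i) x') (S (ω i) x) :=
        mul_le_mul_of_nonneg_left (h.le_dist _ _ hne x' hx' x hx)
          (prod_nonneg fun l _ => h.nonneg _)
    _ ≤ _ := prod_mul_dist_le_dist_wordComp h.mapsTo h.nonneg h.mul_dist_le ω i
        (h.mapsTo _ hx') (h.mapsTo _ hx)

variable [MeasurableSpace ι] [MeasurableSingletonClass ι] {p : PMF ι} {t : ℝ}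

lemma bernoulli_preimage_le (h : IsSeparatedWith S K₀ b δ)
    (hπ : ∀ ω k, π ω ∈ wordComp S ω k '' K₀) (hp : ∀ j, p j = ENNReal.ofReal (b j ^ t))
    (ht : 0 ≤ t) {β : ℝ} (hbβ : ∀ j, b j ≤ β) (hβ : β < 1) (hδ : 0 < δ) {s : Set X} {ρ : ℝ}
    (hρ : 0 < ρ) (hs : ∀ x ∈ s, ∀ y ∈ s, dist x y < ρ) :
    bernoulli p (π ⁻¹' s) ≤ ENNReal.ofReal ((ρ / δ) ^ t) := by
  classical
  rcases (π ⁻¹' s).eq_empty_or_nonempty with hempty | ⟨ω₀, hω₀⟩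
  · simp [hempty]
  have hex := exists_mul_prod_lt h.nonneg hbβ hβ δ ω₀ hρ
  -- Codes leaving the cylinder of `ω₀` before level `Nat.find hex` are `ρ`-far from `ω₀`.
  have hsub : π ⁻¹' s ⊆ cylinder ω₀ (Nat.find hex) := by
    intro ω hω
    by_contra hk
    have hne : ω ≠ ω₀ := by rintro rfl; exact hk (self_mem_cylinder _ _)
    refine Nat.find_min hex (not_le.1 ((mem_cylinder_iff_le_firstDiff hne _).not.1 hk)) ?_
    exact (h.mul_prod_le_dist hπ (mem_cylinder_firstDiff ω ω₀) (apply_firstDiff_ne hne)).trans_lt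
      (hs _ hω _ hω₀)
  calc bernoulli p (π ⁻¹' s) ≤ bernoulli p (cylinder ω₀ (Nat.find hex)) := measure_mono hsub
    _ = ENNReal.ofReal ((∏ i ∈ range (Nat.find hex), b (ω₀ i)) ^ t) := by
      rw [bernoulli_cylinder, ← Real.finsetProd_rpow _ _ fun i _ => h.nonneg _,
        ENNReal.ofReal_prod_of_nonneg fun i _ => Real.rpow_nonneg (h.nonneg _) _]
      simp only [hp]
    _ ≤ ENNReal.ofReal ((ρ / δ) ^ t) := by
      gcongr
      · exact prod_nonneg fun i _ => h.nonneg _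
      · rw [le_div_iff₀ hδ, mul_comm]
        exact (Nat.find_spec hex).le

lemma map_bernoulli_le [MeasurableSpace X] [BorelSpace X] (h : IsSeparatedWith S K₀ b δ)
    (hπ : ∀ ω k, π ω ∈ wordComp S ω k '' K₀) (hπm : Measurable π)
    (hp : ∀ j, p j = ENNReal.ofReal (b j ^ t)) (ht : 0 < t) {β : ℝ} (hbβ : ∀ j, b j ≤ β)
    (hβ : β < 1) (hδ : 0 < δ) {s : Set X} (hs : Bornology.IsBounded s) :
    (bernoulli p).map π s ≤ ENNReal.ofReal ((diam s / δ) ^ t) := by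
  have hcont : ContinuousAt (fun ρ => ENNReal.ofReal ((ρ / δ) ^ t)) (diam s) :=
    ENNReal.continuous_ofReal.continuousAt.comp (by fun_prop (disch := positivity))
  refine ge_of_tendsto (hcont.tendsto.mono_left (nhdsWithin_le_nhds (s := Ioi (diam s))))
    (eventually_nhdsWithin_of_forall fun ρ hρ => ?_)
  calc (bernoulli p).map π s ≤ (bernoulli p).map π (closure s) := measure_mono subset_closure
    _ = bernoulli p (π ⁻¹' closure s) := Measure.map_apply hπm isClosed_closure.measurableSet
    _ ≤ _ := h.bernoulli_preimage_le hπ hp ht.le hbβ hβ hδ (diam_nonneg.trans_lt hρ)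
        fun x hx y hy => (dist_le_diam_of_mem hs.closure hx hy).trans_lt (by rwa [diam_closure])

end IsSeparatedWith

end IteratedFunctionSystem

open IteratedFunctionSystem in
theorem stmt_18_general (d m : ℕ) (K K₀ : Set (EuclideanSpace ℝ (Fin d)))
    (S : Fin m → EuclideanSpace ℝ (Fin d) → EuclideanSpace ℝ (Fin d))
    (b : Fin m → ℝ) (hb : ∀ j, b j ∈ Set.Ioo (0 : ℝ) 1)
    (c : ℝ) (hc : c < 1)
    (hlip : ∀ j, ∀ x ∈ K, ∀ y ∈ K,
      b j * ‖x - y‖ ≤ ‖S j x - S j y‖ ∧ ‖S j x - S j y‖ ≤ c * ‖x - y‖)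
    (hK₀ : K₀.Nonempty) (hK₀c : IsCompact K₀) (hK₀K : K₀ ⊆ K)
    (hinv : K₀ = ⋃ j, S j '' K₀)
    (hdisj : ∀ j k, j ≠ k → Disjoint (S j '' K₀) (S k '' K₀))
    (t : ℝ) (ht : 0 < t) (hsum : ∑ j, b j ^ t = 1) :
    ENNReal.ofReal t ≤ dimH K₀ := by
  have hmaps : ∀ j, MapsTo (S j) K₀ K₀ := fun j =>
    mapsTo_iff_image_subset.2 ((subset_iUnion (fun k => S k '' K₀) j).trans hinv.superset)
  have hlipK₀ : ∀ j, LipschitzOnWith c.toNNReal (S j) K₀ := fun j =>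
    LipschitzOnWith.of_dist_le' fun x hx y hy => by
      simpa only [dist_eq_norm] using (hlip j x (hK₀K hx) y (hK₀K hy)).2
  obtain ⟨δ, hδ, hsep⟩ := exists_pos_le_dist_of_pairwise_disjoint
    (fun j => hK₀c.image_of_continuousOn (hlipK₀ j).continuousOn) hdisj
  have hsepw : IsSeparatedWith S K₀ b δ :=
    ⟨hmaps, fun j => (hb j).1.le, fun j x hx y hy => by
      simpa only [dist_eq_norm] using (hlip j x (hK₀K hx) y (hK₀K hy)).1,
      fun j k hjk x hx y hy => hsep j k hjk _ (mem_image_of_mem _ hx) _ (mem_image_of_mem _ hy)⟩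
  obtain ⟨β, hbβ, hβ⟩ :=
    ((eventually_all.2 fun j => Ioo_mem_nhdsLT (hb j).2).and
      (self_mem_nhdsWithin (s := Iio (1 : ℝ)))).exists
  obtain ⟨π, hπc, hπ⟩ := exists_continuous_coding hK₀c hK₀ hmaps (Real.toNNReal_lt_one.2 hc) hlipK₀
  let p : PMF (Fin m) := PMF.ofFintype (fun j => ENNReal.ofReal (b j ^ t)) (by
    rw [← ENNReal.ofReal_sum_of_nonneg fun j _ => Real.rpow_nonneg (hb j).1.le t, hsum,
      ENNReal.ofReal_one])
  refine le_dimH_of_measure_le_diam_div_rpow ((bernoulli p).map π) ?_ hδ ht.le fun u hu =>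
    hsepw.map_bernoulli_le hπ hπc.measurable (fun j => rfl) ht (fun j => (hbβ j).1.le) hβ hδ hu
  have hcover : π ⁻¹' K₀ = univ := Set.eq_univ_of_forall fun ω => by simpa [wordComp] using hπ ω 0
  rw [Measure.map_apply hπc.measurable hK₀c.isClosed.measurableSet, hcover, measure_univ]
  exact one_ne_zero

theorem stmt_18 (d m : ℕ) (K K₀ : Set (EuclideanSpace ℝ (Fin d)))
    (hK : IsClosed K)
    (S : Fin m → EuclideanSpace ℝ (Fin d) → EuclideanSpace ℝ (Fin d))
    (hS : ∀ j, Set.MapsTo (S j) K K)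
    (b : Fin m → ℝ) (hb : ∀ j, b j ∈ Set.Ioo (0 : ℝ) 1)
    (c : ℝ) (hc : c < 1)
    (hlip : ∀ j, ∀ x ∈ K, ∀ y ∈ K,
      b j * ‖x - y‖ ≤ ‖S j x - S j y‖ ∧ ‖S j x - S j y‖ ≤ c * ‖x - y‖)
    (hK₀ : K₀.Nonempty) (hK₀c : IsCompact K₀) (hK₀K : K₀ ⊆ K)
    (hinv : K₀ = ⋃ j, S j '' K₀)
    (hdisj : ∀ j k, j ≠ k → Disjoint (S j '' K₀) (S k '' K₀))
    (t : ℝ) (ht : 0 < t) (hsum : ∑ j, b j ^ t = 1) :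
    ENNReal.ofReal t ≤ dimH K₀ :=
  stmt_18_general d m K K₀ S b hb c hc hlip hK₀ hK₀c hK₀K hinv hdisj t ht hsum
end
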